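/- Let C be an n×n complex matrix with ‖C‖ ≤ 1, set D = I − C*C, let d = rank D and let B be a d×n matrix with B*B = D. For j ≥ 1 let T_j be the (jd+n)×(jd+n) block matrix whose (i, i+1) block is I_d for 1 ≤ i ≤ j−1, whose (j, j+1) block is B, whose (j+1, j+1) block is C, and whose other blocks are zero. Then the following are equivalent: (i) for every j ≥ 1, the characteristic polynomial of H_{T_j}(θ) = (1/2)(e^{−iθ}T_j + e^{iθ}T_j*) is independent of θ ∈ ℝ; (ii) for every j with 1 ≤ j ≤ d+1, the characteristic polynomial of H_{T_j}(θ) is independent of θ ∈ ℝ. -/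

import Mathlib

open Matrix Complex

/-- The `j`-th level of the partial isometry tower of the contraction `C`,
built from a `d × n` matrix `B` with `Bᴴ * B = 1 - Cᴴ * C`. -/
noncomputable def tower (n d : ℕ) (B : Matrix (Fin d) (Fin n) ℂ)
    (C : Matrix (Fin n) (Fin n) ℂ) (j : ℕ) :
    Matrix ((Fin j × Fin d) ⊕ Fin n) ((Fin j × Fin d) ⊕ Fin n) ℂ :=
  fun p q =>
    match p, q with
    | Sum.inl (i, a), Sum.inl (i', a') =>
        if (i' : ℕ) = (i : ℕ) + 1 ∧ a' = a then 1 else 0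
    | Sum.inl (i, a), Sum.inr b => if (i : ℕ) = j - 1 then B a b else 0
    | Sum.inr _, Sum.inl _ => 0
    | Sum.inr b, Sum.inr b' => C b b'

/-- `H_M(θ) = (1/2)(e^{-iθ} M + e^{iθ} Mᴴ)`. -/
noncomputable def Hmat {ι : Type*} [Fintype ι] [DecidableEq ι]
    (M : Matrix ι ι ℂ) (θ : ℝ) : Matrix ι ι ℂ :=
  (1 / 2 : ℂ) • (Complex.exp (-(θ : ℂ) * Complex.I) • M
    + Complex.exp ((θ : ℂ) * Complex.I) • Mᴴ)

namespace Stmt4Aux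

open Polynomial

/- ### evaluation of the characteristic polynomial -/

lemma eval_charpoly' {m : Type*} [Fintype m] [DecidableEq m] (M : Matrix m m ℂ) (x : ℂ) :
    (M.charpoly).eval x = (x • (1 : Matrix m m ℂ) - M).det := by
  rw [Matrix.charpoly, ← Polynomial.coe_evalRingHom, RingHom.map_det]
  congr 1
  ext i j
  by_cases h : i = j
  · subst h; simp [charmatrix_apply_eq, Matrix.one_apply]
  · simp [charmatrix_apply_ne _ _ _ h, Matrix.one_apply, h]

/- ### the Chebyshev-like sequence -/

noncomputable def qseq (x : ℝ) : ℕ → ℝ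
  | 0 => 1
  | 1 => x
  | (m+2) => x * qseq x (m+1) - qseq x m / 4

lemma qseq_pos {x : ℝ} (hx : 1 ≤ x) : ∀ m, 0 < qseq x m ∧ qseq x m / 2 ≤ qseq x (m+1) := by
  intro m
  induction m with
  | zero => constructor <;> simp [qseq] <;> linarith
  | succ m ih =>
    obtain ⟨h1, h2⟩ := ih
    have h3 : 0 < qseq x (m+1) := by linarith
    constructor
    · exact h3
    · show qseq x (m+1) / 2 ≤ qseq x (m+2)
      have : qseq x (m+2) = x * qseq x (m+1) - qseq x m / 4 := rfl
      nlinarith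

lemma qseq_wronskian {x : ℝ} : ∀ m, qseq x (m+1)^2 - qseq x m * qseq x (m+2) = (1/4)^(m+1) := by
  intro m
  induction m with
  | zero => show qseq x 1 ^2 - qseq x 0 * qseq x 2 = _; simp [qseq]; ring
  | succ m ih =>
    have e1 : qseq x (m+2) = x * qseq x (m+1) - qseq x m / 4 := rfl
    have e2 : qseq x (m+3) = x * qseq x (m+2) - qseq x (m+1) / 4 := rfl
    show qseq x (m+2)^2 - qseq x (m+1) * qseq x (m+3) = (1/4)^(m+2)
    have : qseq x (m+2)^2 - qseq x (m+1) * qseq x (m+3)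
        = (qseq x (m+1)^2 - qseq x m * qseq x (m+2)) / 4 := by
      rw [e2, e1]; ring
    rw [this, ih]; ring

lemma qseq_ratio_mono {x : ℝ} (hx : 1 ≤ x) :
    StrictMono (fun m => qseq x m / qseq x (m+1)) := by
  apply strictMono_nat_of_lt_succ
  intro m
  have h0 := (qseq_pos hx m).1
  have h1 := (qseq_pos hx (m+1)).1
  have h2 := (qseq_pos hx (m+2)).1
  rw [div_lt_div_iff₀ h1 h2]
  have := qseq_wronskian (x := x) m
  have hp : (0:ℝ) < (1/4)^(m+1) := by positivity
  nlinarith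

lemma qseqC_ne {x : ℝ} (hx : 1 ≤ x) (m : ℕ) : ((qseq x m : ℝ) : ℂ) ≠ 0 := by
  exact_mod_cast (qseq_pos hx m).1.ne'

/- ### the deflated chain matrix -/

noncomputable def chain (n d : ℕ) (B : Matrix (Fin d) (Fin n) ℂ) (A : Matrix (Fin n) (Fin n) ℂ)
    (x u : ℂ) (j : ℕ) : Matrix ((Fin j × Fin d) ⊕ Fin n) ((Fin j × Fin d) ⊕ Fin n) ℂ :=
  fun p q => match p, q with
  | Sum.inl (i, a), Sum.inl (i', a') =>
      (if i = i' ∧ a = a' then (if (i : ℕ) = 0 then u else x) else 0)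
      + (if (i' : ℕ) = (i : ℕ) + 1 ∧ a' = a then -(1/2) else 0)
      + (if (i : ℕ) = (i' : ℕ) + 1 ∧ a = a' then -(1/2) else 0)
  | Sum.inl (i, a), Sum.inr b => if (i : ℕ) = j - 1 then -(1/2) * B a b else 0
  | Sum.inr b, Sum.inl (i, a) => if (i : ℕ) = j - 1 then -(1/2) * star (B a b) else 0
  | Sum.inr b, Sum.inr b' => A b b'

noncomputable def smulOneInv {d : ℕ} {u : ℂ} (hu : u ≠ 0) :
    Invertible (u • (1 : Matrix (Fin d) (Fin d) ℂ)) :=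
  ⟨u⁻¹ • 1, by rw [Matrix.smul_mul, Matrix.mul_smul, one_mul, smul_smul, inv_mul_cancel₀ hu, one_smul],
    by rw [Matrix.smul_mul, Matrix.mul_smul, one_mul, smul_smul, mul_inv_cancel₀ hu, one_smul]⟩

section
variable (n d : ℕ) (B : Matrix (Fin d) (Fin n) ℂ) (A : Matrix (Fin n) (Fin n) ℂ) (x u : ℂ)

/-- base case: length-1 chain -/
lemma chain_det_one (hu : u ≠ 0) :
    (chain n d B A x u 1).det = u ^ d * (A - (u⁻¹/4) • (Bᴴ * B)).det := by
  classical
  -- reindex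
  let e : (Fin d ⊕ Fin n) ≃ ((Fin 1 × Fin d) ⊕ Fin n) :=
    { toFun := fun p => p.elim (fun a => Sum.inl (0, a)) Sum.inr
      invFun := fun p => p.elim (fun ia => Sum.inl ia.2) Sum.inr
      left_inv := by rintro (a | b) <;> rfl
      right_inv := by
        rintro (⟨i, a⟩ | b)
        · simp [Subsingleton.elim i 0]
        · rfl }
  have hre : (chain n d B A x u 1).submatrix e e
      = fromBlocks (u • 1) ((-(1/2) : ℂ) • B) ((-(1/2) : ℂ) • Bᴴ) A := by
    ext p q
    rcases p with a | b <;> rcases q with a' | b' <;>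
      simp [chain, e, fromBlocks, Matrix.one_apply, Matrix.smul_apply, conjTranspose_apply,
        Prod.ext_iff, eq_comm]
  have := Matrix.det_submatrix_equiv_self e (chain n d B A x u 1)
  rw [← this, hre]
  letI := smulOneInv (d := d) hu
  rw [Matrix.det_fromBlocks₁₁]
  have hinv : (⅟(u • (1 : Matrix (Fin d) (Fin d) ℂ))) = u⁻¹ • 1 := rfl
  rw [hinv]
  have h2 : ((-(1/2) : ℂ) • Bᴴ) * (u⁻¹ • (1 : Matrix (Fin d) (Fin d) ℂ)) * ((-(1/2) : ℂ) • B)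
      = (u⁻¹/4) • (Bᴴ * B) := by
    simp only [Matrix.smul_mul, Matrix.mul_smul, Matrix.mul_one, smul_smul]
    congr 1
    ring
  rw [h2, Matrix.det_smul, det_one, mul_one]
  simp

/-- the inter-block coupling matrices -/
noncomputable def c12 (n d j : ℕ) : Matrix (Fin d) ((Fin j × Fin d) ⊕ Fin n) ℂ :=
  fun a q => match q with
  | Sum.inl (i, a') => if (i : ℕ) = 0 ∧ a' = a then -(1/2) else 0
  | Sum.inr _ => 0

noncomputable def c21 (n d j : ℕ) : Matrix ((Fin j × Fin d) ⊕ Fin n) (Fin d) ℂ :=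
  fun q a => match q with
  | Sum.inl (i, a') => if (i : ℕ) = 0 ∧ a' = a then -(1/2) else 0
  | Sum.inr _ => 0

lemma chain_det_step (j : ℕ) (hj : 1 ≤ j) (hu : u ≠ 0) :
    (chain n d B A x u (j+1)).det = u ^ d * (chain n d B A x (x - u⁻¹/4) j).det := by
  classical
  let e : (Fin d ⊕ ((Fin j × Fin d) ⊕ Fin n)) ≃ ((Fin (j+1) × Fin d) ⊕ Fin n) :=
    { toFun := fun p => match p with
        | Sum.inl a => Sum.inl (0, a)
        | Sum.inr (Sum.inl (i, a)) => Sum.inl (i.succ, a)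
        | Sum.inr (Sum.inr b) => Sum.inr b
      invFun := fun p => match p with
        | Sum.inl (i, a) => Fin.cases (Sum.inl a) (fun i' => Sum.inr (Sum.inl (i', a))) i
        | Sum.inr b => Sum.inr (Sum.inr b)
      left_inv := by
        rintro (a | (⟨i, a⟩ | b))
        · rfl
        · simp
        · rfl
      right_inv := by
        rintro (⟨i, a⟩ | b)
        · induction i using Fin.cases <;> simp
        · rfl }
  have hre : (chain n d B A x u (j+1)).submatrix e e
      = fromBlocks (u • 1) (c12 n d j) (c21 n d j) (chain n d B A x x j) := by
    ext p q
    rcases p with a | (⟨i, a⟩ | b) <;> rcases q with a' | (⟨i', a'⟩ | b') <;>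
      simp only [submatrix_apply, fromBlocks_apply₁₁, fromBlocks_apply₁₂, fromBlocks_apply₂₁,
        fromBlocks_apply₂₂, chain, c12, c21, e, Equiv.coe_fn_mk, Matrix.smul_apply,
        Matrix.one_apply, smul_eq_mul, mul_ite, mul_one, mul_zero]
    · -- inl inl : top diagonal block
      simp [Prod.ext_iff, Fin.ext_iff, eq_comm]
    · -- inl, inr inl
      have h1 : ¬((0 : Fin (j+1)) = i'.succ ∧ a = a') ∨ True := Or.inr trivial
      simp [Fin.ext_iff, Fin.val_succ, eq_comm]
    · -- inl, inr inr : need 0 ≠ (j+1)-1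
      have hz : ¬ (((0 : Fin (j+1)) : ℕ) = (j+1) - 1) := by simp; omega
      rw [if_neg hz]
    · -- inr inl, inl
      simp [Fin.ext_iff, Fin.val_succ, eq_comm]
    · -- inr inl, inr inl
      simp [Prod.ext_iff, Fin.ext_iff, Fin.val_succ]
    · -- inr inl, inr inr
      have h2 : ((i:ℕ) + 1 = j) ↔ ((i:ℕ) = j - 1) := by omega
      simp [Fin.val_succ, h2]
    · -- inr inr, inl
      have hz : ¬ (((0 : Fin (j+1)) : ℕ) = (j+1) - 1) := by simp; omega
      rw [if_neg hz]
    · -- inr inr, inr inl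
      have h2 : ((i':ℕ) + 1 = j) ↔ ((i':ℕ) = j - 1) := by omega
      simp [Fin.val_succ, h2]
  have hd := Matrix.det_submatrix_equiv_self e (chain n d B A x u (j+1))
  rw [← hd, hre]
  letI := smulOneInv (d := d) hu
  rw [Matrix.det_fromBlocks₁₁]
  have hinv : (⅟(u • (1 : Matrix (Fin d) (Fin d) ℂ))) = u⁻¹ • 1 := rfl
  rw [hinv, Matrix.det_smul, det_one, mul_one]
  -- chain x x j - c21 * (u⁻¹ • 1) * c12 = chain x (x - u⁻¹/4) j
  have hmul : c21 n d j * (u⁻¹ • (1 : Matrix (Fin d) (Fin d) ℂ)) * c12 n d j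
      = Matrix.of fun p q => match p, q with
        | Sum.inl (i, a), Sum.inl (i', a') =>
            if (i:ℕ) = 0 ∧ (i':ℕ) = 0 ∧ a = a' then u⁻¹/4 else 0
        | _, _ => 0 := by
    rw [Matrix.mul_smul, Matrix.mul_one, Matrix.smul_mul]
    ext p q
    rcases p with ⟨i, a⟩ | b <;> rcases q with ⟨i', a'⟩ | b' <;>
      simp only [Matrix.smul_apply, Matrix.mul_apply, c12, c21, of_apply, smul_eq_mul]
    · rw [Finset.sum_eq_single a]
      · have h4 : (a' = a) ↔ (a = a') := eq_comm
        by_cases h1 : (i:ℕ) = 0 <;> by_cases h2 : (i':ℕ) = 0 <;> by_cases h3 : a = a' <;>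
          simp [h1, h2, h3, h4] <;> try ring
      · intro b _ hb
        have hab : ¬ (a = b) := fun h => hb h.symm
        simp [hab]
      · simp
    · simp
    · simp
    · simp
  have hsub : chain n d B A x x j - c21 n d j * (u⁻¹ • (1 : Matrix (Fin d) (Fin d) ℂ)) * c12 n d j
      = chain n d B A x (x - u⁻¹/4) j := by
    rw [hmul]
    ext p q
    rcases p with ⟨i, a⟩ | b <;> rcases q with ⟨i', a'⟩ | b' <;>
      simp only [Matrix.sub_apply, of_apply, chain, sub_zero]
    · by_cases h1 : (i:ℕ) = 0 <;> by_cases h0 : i = i' ∧ a = a'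
      · have h2 : (i':ℕ) = 0 := by rw [← h0.1]; exact h1
        simp only [h0.1, h0.2, h1, h2, and_self, if_true, if_pos]
        ring
      · have hx : ((i:ℕ) = 0 ∧ (i':ℕ) = 0 ∧ a = a') = False := by
          simp only [eq_iff_iff, iff_false]
          rintro ⟨hh1, hh2, hh3⟩
          exact h0 ⟨Fin.ext (by omega), hh3⟩
        simp only [hx, if_false]
        simp [h0, h1]
      · have hx : ((i:ℕ) = 0 ∧ (i':ℕ) = 0 ∧ a = a') = False := by
          simp only [eq_iff_iff, iff_false]; exact fun hh => h1 hh.1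
        have h2 : ¬((i':ℕ) = 0) := by rw [← h0.1]; exact h1
        simp only [hx, if_false]
        simp [h0.1, h0.2, h1, h2]
      · have hx : ((i:ℕ) = 0 ∧ (i':ℕ) = 0 ∧ a = a') = False := by
          simp only [eq_iff_iff, iff_false]; exact fun hh => h1 hh.1
        simp only [hx, if_false]
        simp [h0, h1]
  rw [hsub]
  simp

end

private lemma conj_factor (t z c₁ c₂ : ℂ) :
    Complex.exp (t * c₁) * z * Complex.exp (-(t * c₂)) = z * Complex.exp (t * (c₁ - c₂)) := by
  rw [mul_comm (Complex.exp _) z, mul_assoc, ← Complex.exp_add]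
  congr 1; ring

lemma det_resolvent_tower (n d : ℕ) (B : Matrix (Fin d) (Fin n) ℂ)
    (C : Matrix (Fin n) (Fin n) ℂ) (j : ℕ) (hj : 1 ≤ j) (x : ℂ) (θ : ℝ) :
    (x • (1 : Matrix _ _ ℂ) - Hmat (tower n d B C j) θ).det
      = (chain n d B (x • (1 : Matrix _ _ ℂ) - Hmat C θ) x x j).det := by
  classical
  set t : ℂ := (θ : ℂ) * Complex.I with ht
  let k : ((Fin j × Fin d) ⊕ Fin n) → ℂ := Sum.elim (fun ia => ((ia.1 : ℕ) : ℂ)) (fun _ => (j : ℂ))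
  have hM : x • (1 : Matrix _ _ ℂ) - Hmat (tower n d B C j) θ
      = Matrix.diagonal (fun p => Complex.exp (t * k p))
        * chain n d B (x • (1 : Matrix _ _ ℂ) - Hmat C θ) x x j
        * Matrix.diagonal (fun p => Complex.exp (-(t * k p))) := by
    ext p q
    rw [Matrix.mul_diagonal, Matrix.diagonal_mul]
    rcases p with ⟨i, a⟩ | b <;> rcases q with ⟨i', a'⟩ | b'
    · -- inl inl
      by_cases h1 : (i' : ℕ) = (i : ℕ) + 1 ∧ a' = a
      · have h0 : ¬ ((i,a) = (i',a')) := by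
          rintro hh; simp only [Prod.mk.injEq] at hh
          have := congrArg Fin.val hh.1; omega
        have h2 : ¬ ((i : ℕ) = (i' : ℕ) + 1 ∧ a = a') := by rintro ⟨hh, _⟩; omega
        have h0' : ¬ (i = i' ∧ a = a') := fun hh => h0 (Prod.ext hh.1 hh.2)
        simp only [Matrix.sub_apply, Matrix.smul_apply, Matrix.one_apply, Hmat, tower,
          Matrix.add_apply, Matrix.conjTranspose_apply, chain, Sum.elim_inl, k,
          if_pos h1, if_neg h2, if_neg h0', Sum.inl.injEq, if_neg h0, smul_eq_mul]
        rw [conj_factor]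
        have hc : t * (((i:ℕ):ℂ) - ((i':ℕ):ℂ)) = -(θ:ℂ) * Complex.I := by
          rw [h1.1]; push_cast; ring
        rw [hc]
        simp only [star_zero, mul_zero, mul_one, zero_add, add_zero]
        ring
      · by_cases h2 : (i : ℕ) = (i' : ℕ) + 1 ∧ a = a'
        · have h0 : ¬ ((i,a) = (i',a')) := by
            rintro hh; simp only [Prod.mk.injEq] at hh
            have := congrArg Fin.val hh.1; omega
          have h0' : ¬ (i = i' ∧ a = a') := fun hh => h0 (Prod.ext hh.1 hh.2)
          simp only [Matrix.sub_apply, Matrix.smul_apply, Matrix.one_apply, Hmat, tower,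
            Matrix.add_apply, Matrix.conjTranspose_apply, chain, Sum.elim_inl, k,
            if_pos h2, if_neg h1, if_neg h0', Sum.inl.injEq, if_neg h0, smul_eq_mul]
          rw [conj_factor]
          have hc : t * (((i:ℕ):ℂ) - ((i':ℕ):ℂ)) = (θ:ℂ) * Complex.I := by
            rw [h2.1]; push_cast; ring
          rw [hc]
          simp only [star_one, star_zero, mul_zero, mul_one, zero_add, add_zero]
          ring
        · by_cases h0 : i = i' ∧ a = a'
          · have h0' : (i, a) = (i', a') := Prod.ext h0.1 h0.2
            simp only [Matrix.sub_apply, Matrix.smul_apply, Matrix.one_apply, Hmat, tower,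
              Matrix.add_apply, Matrix.conjTranspose_apply, chain, Sum.elim_inl, k,
              if_pos h0, if_neg h1, if_neg h2, Sum.inl.injEq, if_pos h0', smul_eq_mul]
            rw [conj_factor]
            have hc : t * (((i:ℕ):ℂ) - ((i':ℕ):ℂ)) = 0 := by
              rw [h0.1]; ring
            rw [hc, Complex.exp_zero]
            simp only [star_zero, mul_zero, mul_one, zero_add, add_zero, ite_self]
            ring
          · have h0' : ¬ ((i, a) = (i', a')) := fun hh => by
              rw [Prod.ext_iff] at hh; exact h0 ⟨hh.1, hh.2⟩
            simp only [Matrix.sub_apply, Matrix.smul_apply, Matrix.one_apply, Hmat, tower,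
              Matrix.add_apply, Matrix.conjTranspose_apply, chain, Sum.elim_inl, k,
              if_neg h0, if_neg h1, if_neg h2, Sum.inl.injEq, if_neg h0', smul_eq_mul]
            simp
    · -- inl inr
      by_cases h : (i : ℕ) = j - 1
      · simp only [Matrix.sub_apply, Matrix.smul_apply, Matrix.one_apply, Hmat, tower,
          Matrix.add_apply, Matrix.conjTranspose_apply, chain, Sum.elim_inl, Sum.elim_inr, k,
          if_pos h, smul_eq_mul]
        rw [conj_factor]
        have hc : t * (((i:ℕ):ℂ) - (j:ℂ)) = -(θ:ℂ) * Complex.I := by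
          rw [h]
          have : ((j - 1 : ℕ) : ℂ) = (j : ℂ) - 1 := by
            have := Nat.cast_sub (R := ℂ) hj
            simpa using this
          rw [this]; push_cast; ring
        rw [hc]
        simp only [star_zero, mul_zero, mul_one, zero_add, add_zero]
        simp
        try ring
      · simp only [Matrix.sub_apply, Matrix.smul_apply, Matrix.one_apply, Hmat, tower,
          Matrix.add_apply, Matrix.conjTranspose_apply, chain, Sum.elim_inl, Sum.elim_inr, k,
          if_neg h, smul_eq_mul]
        simp
    · -- inr inl
      by_cases h : (i' : ℕ) = j - 1
      · simp only [Matrix.sub_apply, Matrix.smul_apply, Matrix.one_apply, Hmat, tower,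
          Matrix.add_apply, Matrix.conjTranspose_apply, chain, Sum.elim_inl, Sum.elim_inr, k,
          if_pos h, smul_eq_mul]
        rw [conj_factor]
        have hc : t * ((j:ℂ) - ((i':ℕ):ℂ)) = (θ:ℂ) * Complex.I := by
          rw [h]
          have : ((j - 1 : ℕ) : ℂ) = (j : ℂ) - 1 := by
            have := Nat.cast_sub (R := ℂ) hj
            simpa using this
          rw [this]; push_cast; ring
        rw [hc]
        simp only [star_zero, mul_zero, mul_one, zero_add, add_zero, zero_mul]
        simp
        try ring
      · simp only [Matrix.sub_apply, Matrix.smul_apply, Matrix.one_apply, Hmat, tower,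
          Matrix.add_apply, Matrix.conjTranspose_apply, chain, Sum.elim_inl, Sum.elim_inr, k,
          if_neg h, smul_eq_mul]
        simp
    · -- inr inr
      simp only [Matrix.sub_apply, Matrix.smul_apply, Matrix.one_apply, Hmat, tower,
        Matrix.add_apply, Matrix.conjTranspose_apply, chain, Sum.elim_inr, k, smul_eq_mul]
      rw [conj_factor, sub_self, mul_zero, Complex.exp_zero, mul_one]
      simp [Matrix.one_apply]
  rw [hM, Matrix.det_mul, Matrix.det_mul, Matrix.det_diagonal, Matrix.det_diagonal]
  have hprod : (∏ p, Complex.exp (t * k p)) * (∏ p, Complex.exp (-(t * k p))) = 1 := by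
    rw [← Finset.prod_mul_distrib]
    apply Finset.prod_eq_one
    intro p _
    rw [← Complex.exp_add, add_neg_cancel, Complex.exp_zero]
  calc (∏ p, Complex.exp (t * k p))
        * (chain n d B (x • (1 : Matrix _ _ ℂ) - Hmat C θ) x x j).det
        * (∏ p, Complex.exp (-(t * k p)))
      = ((∏ p, Complex.exp (t * k p)) * (∏ p, Complex.exp (-(t * k p))))
        * (chain n d B (x • (1 : Matrix _ _ ℂ) - Hmat C θ) x x j).det := by ring
    _ = _ := by rw [hprod, one_mul]

/- ### pencil degree bound -/

lemma natDegree_det_le {ι : Type*} [Fintype ι] [DecidableEq ι] (M : Matrix ι ι ℂ[X])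
    (c : ι → ℕ) (h : ∀ p q, (M p q).natDegree ≤ c q) :
    M.det.natDegree ≤ ∑ q, c q := by
  rw [Matrix.det_apply]
  apply Polynomial.natDegree_sum_le_of_forall_le
  intro σ _
  have h1 : (Equiv.Perm.sign σ • ∏ i, M (σ i) i).natDegree = (∏ i, M (σ i) i).natDegree := by
    rcases Int.units_eq_one_or (Equiv.Perm.sign σ) with hs | hs <;>
      rw [hs] <;> simp [Units.smul_def]
  rw [h1]
  calc (∏ i, M (σ i) i).natDegree ≤ ∑ i, (M (σ i) i).natDegree :=
        Polynomial.natDegree_prod_le _ _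
    _ ≤ ∑ q, c q := Finset.sum_le_sum fun q _ => h (σ q) q

/-- the pencil `det (A - s • Bᴴ B)` as a polynomial in `s` -/
noncomputable def pencil {n d : ℕ} (B : Matrix (Fin d) (Fin n) ℂ)
    (A : Matrix (Fin n) (Fin n) ℂ) : ℂ[X] :=
  (A.map Polynomial.C - (X : ℂ[X]) • ((Bᴴ * B).map Polynomial.C)).det

lemma pencil_eval {n d : ℕ} (B : Matrix (Fin d) (Fin n) ℂ)
    (A : Matrix (Fin n) (Fin n) ℂ) (s : ℂ) :
    (pencil B A).eval s = (A - s • (Bᴴ * B)).det := by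
  rw [pencil, ← Polynomial.coe_evalRingHom, RingHom.map_det]
  congr 1
  ext p q
  simp only [RingHom.mapMatrix_apply, Matrix.map_apply, Matrix.sub_apply, Matrix.smul_apply, smul_eq_mul,
    coe_evalRingHom, eval_sub, eval_mul, eval_X, eval_C]

lemma pencil_natDegree_le {n d : ℕ} (B : Matrix (Fin d) (Fin n) ℂ)
    (A : Matrix (Fin n) (Fin n) ℂ) : (pencil B A).natDegree ≤ d := by
  have hblock : pencil B A
      = (fromBlocks (A.map Polynomial.C) ((X : ℂ[X]) • (Bᴴ.map Polynomial.C))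
          (B.map Polynomial.C) (1 : Matrix (Fin d) (Fin d) ℂ[X])).det := by
    rw [Matrix.det_fromBlocks_one₂₂, pencil]
    congr 1
    rw [Matrix.smul_mul, ← Matrix.map_mul]
  rw [hblock]
  have := natDegree_det_le
    (fromBlocks (A.map Polynomial.C) ((X : ℂ[X]) • (Bᴴ.map Polynomial.C))
      (B.map Polynomial.C) (1 : Matrix (Fin d) (Fin d) ℂ[X]))
    (Sum.elim (fun _ : Fin n => 0) (fun _ : Fin d => 1)) ?_
  · refine le_trans this ?_
    simp [Fintype.sum_sum_type]
  · rintro p (q | q)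
    · rcases p with p | p <;> simp [fromBlocks_apply₁₁, fromBlocks_apply₂₁, Matrix.map_apply]
    · rcases p with p | p
      · simp only [fromBlocks_apply₁₂, Matrix.smul_apply, Matrix.map_apply, smul_eq_mul,
          Sum.elim_inr]
        calc (X * Polynomial.C (Bᴴ p q)).natDegree
            ≤ X.natDegree + (Polynomial.C (Bᴴ p q)).natDegree := natDegree_mul_le
          _ ≤ 1 := by simp
      · simp only [fromBlocks_apply₂₂, Sum.elim_inr, Matrix.one_apply]
        split <;> simp

/- ### unrolling the chain determinant -/

variable {n d : ℕ}

lemma chain_det_unroll (B : Matrix (Fin d) (Fin n) ℂ) (A : Matrix (Fin n) (Fin n) ℂ)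
    {x : ℝ} (hx : 1 ≤ x) :
    ∀ j, 1 ≤ j → ∀ m : ℕ,
      (chain n d B A (x : ℂ) (((qseq x (m+1) : ℝ) : ℂ) / ((qseq x m : ℝ) : ℂ)) j).det
        = (((qseq x (m+j) : ℝ) : ℂ) / ((qseq x m : ℝ) : ℂ)) ^ d
          * (A - ((((qseq x (m+j-1) : ℝ) : ℂ) / ((qseq x (m+j) : ℝ) : ℂ)) / 4)
              • (Bᴴ * B)).det := by
  intro j hj
  induction j, hj using Nat.le_induction with
  | base =>
    intro m
    have hu : (((qseq x (m+1) : ℝ) : ℂ) / ((qseq x m : ℝ) : ℂ)) ≠ 0 :=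
      div_ne_zero (qseqC_ne hx (m+1)) (qseqC_ne hx m)
    rw [chain_det_one n d B A _ _ hu, inv_div]
    simp
  | succ j hj ih =>
    intro m
    have hu : (((qseq x (m+1) : ℝ) : ℂ) / ((qseq x m : ℝ) : ℂ)) ≠ 0 :=
      div_ne_zero (qseqC_ne hx (m+1)) (qseqC_ne hx m)
    rw [chain_det_step n d B A _ _ j hj hu]
    have hrecC : ((qseq x (m+2) : ℝ) : ℂ)
        = (x : ℂ) * ((qseq x (m+1) : ℝ) : ℂ) - ((qseq x m : ℝ) : ℂ) / 4 := by
      have : qseq x (m+2) = x * qseq x (m+1) - qseq x m / 4 := rfl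
      rw [this]; push_cast; ring
    have key : (x : ℂ) - (((qseq x (m+1) : ℝ) : ℂ) / ((qseq x m : ℝ) : ℂ))⁻¹ / 4
        = ((qseq x (m+2) : ℝ) : ℂ) / ((qseq x (m+1) : ℝ) : ℂ) := by
      rw [inv_div, hrecC]
      field_simp [qseqC_ne hx m, qseqC_ne hx (m+1)]
    rw [key]
    have ih' := ih (m+1)
    rw [ih']
    have h1 : m + 1 + j = m + (j+1) := by omega
    have h2 : m + 1 + j - 1 = m + (j+1) - 1 := by omega
    rw [h1, ← mul_assoc, ← mul_pow]
    congr 2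
    rw [div_mul_div_comm]
    rw [mul_comm (((qseq x (m+1) : ℝ) : ℂ)) _, mul_div_mul_right _ _ (qseqC_ne hx (m+1))]

/- ### the key cancellation -/

lemma key_dets (B : Matrix (Fin d) (Fin n) ℂ) (C : Matrix (Fin n) (Fin n) ℂ)
    (hyp : ∀ j : ℕ, 1 ≤ j → j ≤ d + 1 → ∀ θ : ℝ,
        (Hmat (tower n d B C j) θ).charpoly = (Hmat (tower n d B C j) 0).charpoly)
    {x : ℝ} (hx : 1 ≤ x) (θ : ℝ) (s : ℂ) :
    ((x : ℂ) • (1 : Matrix (Fin n) (Fin n) ℂ) - Hmat C θ - s • (Bᴴ * B)).det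
      = ((x : ℂ) • (1 : Matrix (Fin n) (Fin n) ℂ) - Hmat C 0 - s • (Bᴴ * B)).det := by
  classical
  set Aθ := (x : ℂ) • (1 : Matrix (Fin n) (Fin n) ℂ) - Hmat C θ with hAθ
  set A0 := (x : ℂ) • (1 : Matrix (Fin n) (Fin n) ℂ) - Hmat C 0 with hA0
  set g : ℂ[X] := pencil B Aθ - pencil B A0 with hg
  have hdeg : g.natDegree ≤ d := by
    refine le_trans (Polynomial.natDegree_sub_le _ _) ?_
    exact max_le (pencil_natDegree_le B Aθ) (pencil_natDegree_le B A0)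
  -- the determinant formula at level j
  have hform : ∀ j, 1 ≤ j → ∀ θ' : ℝ,
      ((Hmat (tower n d B C j) θ').charpoly).eval (x : ℂ)
        = (((qseq x j : ℝ) : ℂ)) ^ d
          * (((x : ℂ) • (1 : Matrix (Fin n) (Fin n) ℂ) - Hmat C θ'
              - ((((qseq x (j-1) : ℝ) : ℂ) / ((qseq x j : ℝ) : ℂ)) / 4) • (Bᴴ * B)).det) := by
    intro j hj θ'
    rw [eval_charpoly', det_resolvent_tower n d B C j hj (x : ℂ) θ']
    have hx1 : (x : ℂ) = ((qseq x (0+1) : ℝ) : ℂ) / ((qseq x 0 : ℝ) : ℂ) := by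
      show (x : ℂ) = ((qseq x 1 : ℝ) : ℂ) / ((qseq x 0 : ℝ) : ℂ)
      simp [qseq]
    calc (chain n d B ((x:ℂ) • 1 - Hmat C θ') (x:ℂ) (x:ℂ) j).det
        = (chain n d B ((x:ℂ) • 1 - Hmat C θ') (x:ℂ)
            (((qseq x (0+1) : ℝ) : ℂ) / ((qseq x 0 : ℝ) : ℂ)) j).det := by rw [← hx1]
      _ = _ := by
          rw [chain_det_unroll B _ hx j hj 0]
          simp only [Nat.zero_add, zero_add]
          have hq0 : ((qseq x 0 : ℝ) : ℂ) = 1 := by simp [qseq]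
          rw [hq0, div_one]
  have hroot : ∀ k : Fin (d+1),
      g.eval ((((qseq x (k : ℕ) : ℝ) : ℂ) / ((qseq x ((k : ℕ)+1) : ℝ) : ℂ)) / 4) = 0 := by
    intro k
    have hk1 : 1 ≤ (k : ℕ) + 1 := by omega
    have hk2 : (k : ℕ) + 1 ≤ d + 1 := by omega
    have hcp := hyp ((k : ℕ)+1) hk1 hk2 θ
    have := congrArg (fun p : ℂ[X] => p.eval (x : ℂ)) hcp
    rw [hform _ hk1 θ, hform _ hk1 0] at this
    have hcancel := mul_left_cancel₀ (pow_ne_zero d (qseqC_ne hx ((k : ℕ)+1))) this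
    simp only [Nat.add_sub_cancel] at hcancel
    rw [hg, Polynomial.eval_sub, pencil_eval, pencil_eval]
    rw [hcancel, sub_self]
  have hinj : Function.Injective
      (fun k : Fin (d+1) => (((qseq x (k : ℕ) : ℝ) : ℂ) / ((qseq x ((k : ℕ)+1) : ℝ) : ℂ)) / 4) := by
    intro k k' h
    have h0 := congrArg (fun z : ℂ => z * 4) h
    simp only [div_mul_cancel₀ _ (by norm_num : (4:ℂ) ≠ 0)] at h0
    have h4 : (((qseq x (k : ℕ) : ℝ) : ℂ) / ((qseq x ((k : ℕ)+1) : ℝ) : ℂ))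
        = (((qseq x (k' : ℕ) : ℝ) : ℂ) / ((qseq x ((k' : ℕ)+1) : ℝ) : ℂ)) := h0
    rw [← Complex.ofReal_div, ← Complex.ofReal_div] at h4
    have h5 : qseq x (k : ℕ) / qseq x ((k : ℕ)+1) = qseq x (k' : ℕ) / qseq x ((k' : ℕ)+1) :=
      Complex.ofReal_inj.mp h4
    have := (qseq_ratio_mono hx).injective h5
    exact Fin.ext this
  have hzero : g = 0 := by
    apply Polynomial.eq_zero_of_natDegree_lt_card_of_eval_eq_zero g hinj hroot
    rw [Fintype.card_fin]
    omega
  have := congrArg (fun p : ℂ[X] => p.eval s) hzero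
  simp only [Polynomial.eval_zero, hg, Polynomial.eval_sub, pencil_eval] at this
  exact sub_eq_zero.mp this

end Stmt4Aux

open Stmt4Aux Polynomial

theorem stmt4 (n d : ℕ) (C : Matrix (Fin n) (Fin n) ℂ)
    (hC : ‖Matrix.toEuclideanCLM (𝕜 := ℂ) C‖ ≤ 1)
    (hd : d = (1 - Cᴴ * C).rank)
    (B : Matrix (Fin d) (Fin n) ℂ) (hB : Bᴴ * B = 1 - Cᴴ * C) :
    (∀ j : ℕ, 1 ≤ j → ∀ θ : ℝ,
        (Hmat (tower n d B C j) θ).charpoly = (Hmat (tower n d B C j) 0).charpoly) ↔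
    (∀ j : ℕ, 1 ≤ j → j ≤ d + 1 → ∀ θ : ℝ,
        (Hmat (tower n d B C j) θ).charpoly = (Hmat (tower n d B C j) 0).charpoly) := by
  constructor
  · exact fun h j hj _ θ => h j hj θ
  · intro hyp j hj θ
    apply Polynomial.eq_of_infinite_eval_eq
    have hIci : (Set.Ici (1 : ℝ)).Infinite := Set.Ici_infinite 1
    have himg : ((fun t : ℝ => (t : ℂ)) '' Set.Ici 1).Infinite :=
      hIci.image (Complex.ofReal_injective.injOn)
    apply himg.mono
    rintro z ⟨x, hx, rfl⟩
    simp only [Set.mem_setOf_eq]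
    -- evaluate both charpolys at x
    rw [eval_charpoly', eval_charpoly',
      det_resolvent_tower n d B C j hj (x : ℂ) θ, det_resolvent_tower n d B C j hj (x : ℂ) 0]
    have hx1 : (x : ℂ) = ((qseq x (0+1) : ℝ) : ℂ) / ((qseq x 0 : ℝ) : ℂ) := by
      show (x : ℂ) = ((qseq x 1 : ℝ) : ℂ) / ((qseq x 0 : ℝ) : ℂ)
      simp [qseq]
    rw [show (chain n d B ((x:ℂ) • 1 - Hmat C θ) (x:ℂ) (x:ℂ) j)
        = (chain n d B ((x:ℂ) • 1 - Hmat C θ) (x:ℂ)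
            (((qseq x (0+1) : ℝ) : ℂ) / ((qseq x 0 : ℝ) : ℂ)) j) from by rw [← hx1],
      show (chain n d B ((x:ℂ) • 1 - Hmat C 0) (x:ℂ) (x:ℂ) j)
        = (chain n d B ((x:ℂ) • 1 - Hmat C 0) (x:ℂ)
            (((qseq x (0+1) : ℝ) : ℂ) / ((qseq x 0 : ℝ) : ℂ)) j) from by rw [← hx1]]
    rw [chain_det_unroll B _ hx j hj 0, chain_det_unroll B _ hx j hj 0]
    simp only [Nat.zero_add, zero_add]
    congr 1
    exact key_dets B C hyp hx θ _
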